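/- There exists a sufficiently small absolute constant c > 0 with the following property. Assume μ ≤ c/(κ‖X‖), ‖L_{X,⊥}ᵀP_{Z_tQ_t}‖ ≤ c/κ, ‖Z_t‖ ≤ 2√‖X‖, ‖Δ_t‖ ≤ (c/κ)·‖sym(X) − Z_tZ_tᵀ + Z̃_tZ̃_tᵀ‖, σ_min(Z_tQ_t) ≥ √(σ_min(X)/8), and ‖Z_tQ_{t,⊥}‖ ≤ c√(σ_min(X)). Then: (i) ‖L_{X,⊥}ᵀ(sym(X) − Z_tZ_tᵀ + Z̃_tZ̃_tᵀ)‖ ≤ 5‖L_Xᵀ(sym(X) − Z_tZ_tᵀ + Z̃_tZ̃_tᵀ)‖ + 4‖Z_tQ_{t,⊥}‖², and (ii) ‖sym(X) − Z_tZ_tᵀ + Z̃_tZ̃_tᵀ‖ ≤ 6‖L_Xᵀ(sym(X) − Z_tZ_tᵀ + Z̃_tZ̃_tᵀ)‖ + 4‖Z_tQ_{t,⊥}‖². -/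

import Mathlib

open Matrix MeasureTheory ProbabilityTheory

noncomputable section

namespace AsymMatrixSensing

/-- Euclidean norm of a real vector. -/
def euclNorm {ι : Type*} [Fintype ι] (v : ι → ℝ) : ℝ :=
  Real.sqrt (∑ i, v i ^ 2)

/-- Spectral norm of a real matrix. -/
def specNorm {ι₁ ι₂ : Type*} [Fintype ι₁] [Fintype ι₂] (M : Matrix ι₁ ι₂ ℝ) : ℝ :=
  sSup {c : ℝ | ∃ x : ι₂ → ℝ, euclNorm x ≤ 1 ∧ c = euclNorm (M.mulVec x)}

/-- Frobenius norm of a real matrix. -/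
def frobNorm {ι₁ ι₂ : Type*} [Fintype ι₁] [Fintype ι₂] (M : Matrix ι₁ ι₂ ℝ) : ℝ :=
  Real.sqrt (∑ i, ∑ j, M i j ^ 2)

/-- Nuclear norm of a real matrix (characterized by duality with the spectral norm). -/
def nucNorm {ι₁ ι₂ : Type*} [Fintype ι₁] [Fintype ι₂] (M : Matrix ι₁ ι₂ ℝ) : ℝ :=
  sSup {c : ℝ | ∃ B : Matrix ι₁ ι₂ ℝ, specNorm B ≤ 1 ∧ c = ∑ i, ∑ j, M i j * B i j}

/-- Smallest singular value `σ_{min(a,b)}(M)` of a matrix. -/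
def sigmaMin {ι₁ ι₂ : Type*} [Fintype ι₁] [Fintype ι₂] (M : Matrix ι₁ ι₂ ℝ) : ℝ :=
  max (sInf {c : ℝ | ∃ x : ι₂ → ℝ, euclNorm x = 1 ∧ c = euclNorm (M.mulVec x)})
      (sInf {c : ℝ | ∃ y : ι₁ → ℝ, euclNorm y = 1 ∧ c = euclNorm (Mᵀ.mulVec y)})

/-- Smallest nonzero singular value `σ_rank(M)`: the minimum of `‖Mx‖` over unit
vectors `x` orthogonal to the kernel of `M`. -/
def sigmaPos {ι₁ ι₂ : Type*} [Fintype ι₁] [Fintype ι₂] (M : Matrix ι₁ ι₂ ℝ) : ℝ :=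
  sInf {c : ℝ | ∃ x : ι₂ → ℝ, euclNorm x = 1 ∧
    (∀ y : ι₂ → ℝ, M.mulVec y = 0 → x ⬝ᵥ y = 0) ∧ c = euclNorm (M.mulVec x)}

/-- Condition number `κ = ‖M‖ / σ_min(M)`. -/
def condNum {ι₁ ι₂ : Type*} [Fintype ι₁] [Fintype ι₂] (M : Matrix ι₁ ι₂ ℝ) : ℝ :=
  specNorm M / sigmaPos M

/-- Trace inner product `⟨M, N⟩ = trace(Mᵀ N)`. -/
def minner {ι₁ ι₂ : Type*} [Fintype ι₁] [Fintype ι₂] (M N : Matrix ι₁ ι₂ ℝ) : ℝ :=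
  ∑ i, ∑ j, M i j * N i j

/-- `P` is a matrix with orthonormal columns spanning the column space of `M`. -/
def IsOrthCol {ι κ₁ κ₂ : Type*} [Fintype ι] [Fintype κ₁] [Fintype κ₂] [DecidableEq κ₂]
    (P : Matrix ι κ₂ ℝ) (M : Matrix ι κ₁ ℝ) : Prop :=
  Pᵀ * P = 1 ∧ (∃ C : Matrix κ₁ κ₂ ℝ, P = M * C) ∧ P * Pᵀ * M = M

/-- `L` has orthonormal columns spanning the subspace spanned by eigenvectors of the
symmetric matrix `F` corresponding to its `r` largest eigenvalues. -/
def IsTopEigenspace {ι : Type*} [Fintype ι] [DecidableEq ι] {r : ℕ} (F : Matrix ι ι ℝ)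
    (L : Matrix ι (Fin r) ℝ) : Prop :=
  Lᵀ * L = 1 ∧ ∃ d : Fin r → ℝ, F * L = L * Matrix.diagonal d ∧
    ∀ (v : ι → ℝ) (lam : ℝ), v ≠ 0 → F.mulVec v = lam • v →
      Lᵀ.mulVec v = 0 → ∀ i, lam ≤ d i

variable {n₁ n₂ m k r : ℕ}

/-- The measurement operator `𝒜`, given by `[𝒜(Z)]ᵢ = ⟨Aᵢ, Z⟩`. -/
def calA (A : Fin m → Matrix (Fin n₁) (Fin n₂) ℝ) (Z : Matrix (Fin n₁) (Fin n₂) ℝ) :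
    Fin m → ℝ := fun i => minner (A i) Z

/-- The restricted isometry property of order `s` with constant `δ`. -/
def HasRIP (A : Fin m → Matrix (Fin n₁) (Fin n₂) ℝ) (s : ℕ) (δ : ℝ) : Prop :=
  ∀ M : Matrix (Fin n₁) (Fin n₂) ℝ, M.rank ≤ s →
    (1 - δ) * frobNorm M ^ 2 ≤ ∑ i, calA A M i ^ 2 ∧
      ∑ i, calA A M i ^ 2 ≤ (1 + δ) * frobNorm M ^ 2

/-- `𝒜*𝒜`. -/
def AstarA (A : Fin m → Matrix (Fin n₁) (Fin n₂) ℝ) (Z : Matrix (Fin n₁) (Fin n₂) ℝ) :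
    Matrix (Fin n₁) (Fin n₂) ℝ := ∑ i, minner (A i) Z • A i

/-- The symmetrization `sym(X) = [[0, X], [Xᵀ, 0]]`. -/
def symMat (X : Matrix (Fin n₁) (Fin n₂) ℝ) :
    Matrix (Fin n₁ ⊕ Fin n₂) (Fin n₁ ⊕ Fin n₂) ℝ := Matrix.fromBlocks 0 X Xᵀ 0

/-- The symmetrized measurement matrices `Bᵢ = (1/√2)[[0, Aᵢ], [Aᵢᵀ, 0]]`. -/
def Bmat (A : Fin m → Matrix (Fin n₁) (Fin n₂) ℝ) (i : Fin m) :
    Matrix (Fin n₁ ⊕ Fin n₂) (Fin n₁ ⊕ Fin n₂) ℝ :=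
  (Real.sqrt 2)⁻¹ • Matrix.fromBlocks 0 (A i) (A i)ᵀ 0

/-- `ℬ*ℬ`. -/
def BstarB (A : Fin m → Matrix (Fin n₁) (Fin n₂) ℝ)
    (S : Matrix (Fin n₁ ⊕ Fin n₂) (Fin n₁ ⊕ Fin n₂) ℝ) :
    Matrix (Fin n₁ ⊕ Fin n₂) (Fin n₁ ⊕ Fin n₂) ℝ :=
  ∑ i, minner (Bmat A i) S • Bmat A i

/-- The factorized gradient descent iterates `(V_t, W_t)`. -/
def iter (A : Fin m → Matrix (Fin n₁) (Fin n₂) ℝ) (X : Matrix (Fin n₁) (Fin n₂) ℝ)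
    (μ : ℝ) (V₀ : Matrix (Fin n₁) (Fin k) ℝ) (W₀ : Matrix (Fin n₂) (Fin k) ℝ) :
    ℕ → Matrix (Fin n₁) (Fin k) ℝ × Matrix (Fin n₂) (Fin k) ℝ
  | 0 => (V₀, W₀)
  | t + 1 =>
    let p := iter A X μ V₀ W₀ t
    let G := AstarA A (p.1 * p.2ᵀ - X)
    (p.1 - μ • (G * p.2), p.2 - μ • (Gᵀ * p.1))

/-- The vertical stacking `(1/√2)[V; W]`. -/
def Zstack {κ : ℕ} (V : Matrix (Fin n₁) (Fin κ) ℝ) (W : Matrix (Fin n₂) (Fin κ) ℝ) :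
    Matrix (Fin n₁ ⊕ Fin n₂) (Fin κ) ℝ :=
  (Real.sqrt 2)⁻¹ • Matrix.fromRows V W

/-- `Z_t = (1/√2)[V_t; W_t]`. -/
def Zit (A : Fin m → Matrix (Fin n₁) (Fin n₂) ℝ) (X : Matrix (Fin n₁) (Fin n₂) ℝ)
    (μ : ℝ) (V₀ : Matrix (Fin n₁) (Fin k) ℝ) (W₀ : Matrix (Fin n₂) (Fin k) ℝ) (t : ℕ) :
    Matrix (Fin n₁ ⊕ Fin n₂) (Fin k) ℝ :=
  Zstack (iter A X μ V₀ W₀ t).1 (iter A X μ V₀ W₀ t).2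

/-- `Z̃_t = (1/√2)[V_t; −W_t]`. -/
def Ztil (A : Fin m → Matrix (Fin n₁) (Fin n₂) ℝ) (X : Matrix (Fin n₁) (Fin n₂) ℝ)
    (μ : ℝ) (V₀ : Matrix (Fin n₁) (Fin k) ℝ) (W₀ : Matrix (Fin n₂) (Fin k) ℝ) (t : ℕ) :
    Matrix (Fin n₁ ⊕ Fin n₂) (Fin k) ℝ :=
  Zstack (iter A X μ V₀ W₀ t).1 (-(iter A X μ V₀ W₀ t).2)

/-- `Δ_t = (Id − ℬ*ℬ)(Z_tZ_tᵀ − Z̃_tZ̃_tᵀ − sym(X))`. -/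
def Δit (A : Fin m → Matrix (Fin n₁) (Fin n₂) ℝ) (X : Matrix (Fin n₁) (Fin n₂) ℝ)
    (μ : ℝ) (V₀ : Matrix (Fin n₁) (Fin k) ℝ) (W₀ : Matrix (Fin n₂) (Fin k) ℝ) (t : ℕ) :
    Matrix (Fin n₁ ⊕ Fin n₂) (Fin n₁ ⊕ Fin n₂) ℝ :=
  let D := Zit A X μ V₀ W₀ t * (Zit A X μ V₀ W₀ t)ᵀ
    - Ztil A X μ V₀ W₀ t * (Ztil A X μ V₀ W₀ t)ᵀ - symMat X
  D - BstarB A D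

/-- The block diagonal matrix `diag(Id_{n₁}, −Id_{n₂})`. -/
def flipSign (n₁ n₂ : ℕ) : Matrix (Fin n₁ ⊕ Fin n₂) (Fin n₁ ⊕ Fin n₂) ℝ :=
  Matrix.fromBlocks 1 0 0 (-1)

/-- Product Gaussian measure modelling the random initialization pair `(V, W)`
with i.i.d. standard Gaussian entries. -/
def gaussPair (n₁ n₂ k : ℕ) :
    Measure ((Fin n₁ → Fin k → ℝ) × (Fin n₂ → Fin k → ℝ)) :=
  (Measure.pi fun _ : Fin n₁ => Measure.pi fun _ : Fin k => gaussianReal 0 1).prod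
    (Measure.pi fun _ : Fin n₂ => Measure.pi fun _ : Fin k => gaussianReal 0 1)

/-!
With `S = diag(Id, -Id)` one has `Z̃ = S Z`, so the residual `E = sym(X) - Z Zᵀ + Z̃ Z̃ᵀ` is
symmetric and anticommutes with `S`. Split the space into the span of `L_X`, the span of
`S L_X` (orthogonal to it) and the rest, with projection `Π`. Every block of `E` that meets one
of the first two spans is bounded by `‖L_Xᵀ E‖` (the `S L_X` blocks through the
anticommutation), and `Π E Π = S D Dᵀ S - D Dᵀ` with `D = Π Z`, so
`‖E‖ ≤ 4 ‖L_Xᵀ E‖ + 2 ‖D‖²`.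

It remains to show that `D` is small. Restricted to the signal directions `Q_t`, the block
`L_Xᵀ E Π` equals `-(L_Xᵀ Z Q_t)(D Q_t)ᵀ` up to terms bounded by `‖Z Q_{t,⊥}‖²` and
`η ‖D Q_t‖`, where `η = ‖L_{X,⊥}ᵀ Z Q_t‖ ≤ ‖L_{X,⊥}ᵀ P_{Z_t Q_t}‖ ‖Z_t‖`. With `c = 1/100` the
hypotheses give `6 η ≤ σ_min(Z Q_t)`, while `σ_min(L_Xᵀ Z Q_t) ≥ σ_min(Z Q_t) - η` and
`‖D Q_t‖ ≤ η`; hence `‖D Q_t‖² ≤ (‖L_Xᵀ E‖ + 2 ‖Z Q_{t,⊥}‖²) / 4`. Together with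
`‖D‖² ≤ ‖D Q_t‖² + ‖Z Q_{t,⊥}‖²` this yields `‖E‖ ≤ 5 ‖L_Xᵀ E‖ + 4 ‖Z Q_{t,⊥}‖²`, and both
claims follow, the first through `‖L_{X,⊥}ᵀ E‖ ≤ ‖E‖`.
-/

open scoped Matrix.Norms.L2Operator

section L2OpNorm

variable {ι₁ ι₂ ι₃ : Type*} [Fintype ι₁] [Fintype ι₂] [Fintype ι₃]

theorem euclNorm_eq_norm_toLp (v : ι₁ → ℝ) : euclNorm v = ‖WithLp.toLp 2 v‖ := by
  simp [euclNorm, EuclideanSpace.norm_eq]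

variable [DecidableEq ι₂]

theorem euclNorm_mulVec_le (M : Matrix ι₁ ι₂ ℝ) (v : ι₂ → ℝ) :
    euclNorm (M *ᵥ v) ≤ ‖M‖ * euclNorm v := by
  rw [euclNorm_eq_norm_toLp, euclNorm_eq_norm_toLp]
  exact M.l2_opNorm_mulVec (WithLp.toLp 2 v)

theorem l2_opNorm_le_of_euclNorm_mulVec_le {M : Matrix ι₁ ι₂ ℝ} {C : ℝ} (hC : 0 ≤ C)
    (h : ∀ v, euclNorm (M *ᵥ v) ≤ C * euclNorm v) : ‖M‖ ≤ C := by
  refine ContinuousLinearMap.opNorm_le_bound _ hC fun x => ?_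
  have hx := h x.ofLp
  rw [euclNorm_eq_norm_toLp, euclNorm_eq_norm_toLp] at hx
  exact hx

theorem specNorm_eq_l2_opNorm (M : Matrix ι₁ ι₂ ℝ) : specNorm M = ‖M‖ := by
  rw [Matrix.l2_opNorm_def, ← ContinuousLinearMap.sSup_unitClosedBall_eq_norm, specNorm]
  congr 1
  ext c
  constructor
  · rintro ⟨v, hv, rfl⟩
    refine ⟨WithLp.toLp 2 v, ?_, ?_⟩
    · simpa [euclNorm_eq_norm_toLp] using hv
    · simp [euclNorm_eq_norm_toLp]
  · rintro ⟨x, hx, rfl⟩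
    refine ⟨x.ofLp, ?_, ?_⟩
    · simpa [euclNorm_eq_norm_toLp] using hx
    · rw [euclNorm_eq_norm_toLp]; rfl

theorem l2_opNorm_le_one_of_transpose_mul_self_eq_self {M : Matrix ι₂ ι₂ ℝ} (h : Mᵀ * M = M) :
    ‖M‖ ≤ 1 := by
  have := Matrix.l2_opNorm_conjTranspose_mul_self M
  rw [Matrix.conjTranspose_eq_transpose_of_trivial, h] at this
  nlinarith [norm_nonneg M]

theorem l2_opNorm_le_one_of_transpose_mul_self {M : Matrix ι₁ ι₂ ℝ} (h : Mᵀ * M = 1) :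
    ‖M‖ ≤ 1 := by
  have hM := Matrix.l2_opNorm_conjTranspose_mul_self M
  have h1 : ‖(1 : Matrix ι₂ ι₂ ℝ)‖ ≤ 1 :=
    l2_opNorm_le_one_of_transpose_mul_self_eq_self (by simp)
  rw [Matrix.conjTranspose_eq_transpose_of_trivial, h] at hM
  nlinarith [norm_nonneg M]

theorem l2_opNorm_transpose [DecidableEq ι₁] (M : Matrix ι₁ ι₂ ℝ) : ‖Mᵀ‖ = ‖M‖ := by
  rw [← Matrix.conjTranspose_eq_transpose_of_trivial]
  exact Matrix.l2_opNorm_conjTranspose M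

variable [DecidableEq ι₃]

theorem l2_opNorm_mul_le_of_left_le_one {A : Matrix ι₁ ι₂ ℝ} (hA : ‖A‖ ≤ 1)
    (B : Matrix ι₂ ι₃ ℝ) : ‖A * B‖ ≤ ‖B‖ :=
  (Matrix.l2_opNorm_mul A B).trans (mul_le_of_le_one_left (norm_nonneg B) hA)

theorem l2_opNorm_mul_le_of_right_le_one (A : Matrix ι₁ ι₂ ℝ) {B : Matrix ι₂ ι₃ ℝ}
    (hB : ‖B‖ ≤ 1) : ‖A * B‖ ≤ ‖A‖ :=
  (Matrix.l2_opNorm_mul A B).trans (mul_le_of_le_one_right (norm_nonneg A) hB)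

theorem IsOrthCol.l2_opNorm_mul_le {ι ι' κ₁ κ₂ : Type*} [Fintype ι] [Fintype ι'] [Fintype κ₁]
    [Fintype κ₂] [DecidableEq ι] [DecidableEq κ₁] [DecidableEq κ₂] {P : Matrix ι κ₂ ℝ}
    {Y : Matrix ι κ₁ ℝ} (hP : IsOrthCol P Y) (A : Matrix ι' ι ℝ) : ‖A * Y‖ ≤ ‖A * P‖ * ‖Y‖ := by
  obtain ⟨hPP, -, hPY⟩ := hP
  have hPT : ‖Pᵀ‖ ≤ 1 := by
    rw [l2_opNorm_transpose]; exact l2_opNorm_le_one_of_transpose_mul_self hPP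
  calc ‖A * Y‖ = ‖A * P * (Pᵀ * Y)‖ := by
        conv_lhs => rw [← hPY]
        simp only [Matrix.mul_assoc]
    _ ≤ ‖A * P‖ * ‖Pᵀ * Y‖ := Matrix.l2_opNorm_mul _ _
    _ ≤ ‖A * P‖ * ‖Y‖ := by gcongr; exact l2_opNorm_mul_le_of_left_le_one hPT _

end L2OpNorm

theorem card_le_card_of_transpose_mul_self {ι₁ ι₂ : Type*} [Fintype ι₁] [Fintype ι₂]
    [DecidableEq ι₂] {M : Matrix ι₁ ι₂ ℝ} (h : Mᵀ * M = 1) :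
    Fintype.card ι₂ ≤ Fintype.card ι₁ := by
  calc Fintype.card ι₂ = (Mᵀ * M).rank := by rw [h, Matrix.rank_one]
    _ ≤ M.rank := Matrix.rank_mul_le_right _ _
    _ ≤ Fintype.card ι₁ := M.rank_le_card_height

theorem mul_transpose_add_mul_transpose_eq_one {ι α β : Type*} [Fintype ι] [Fintype α]
    [Fintype β] [DecidableEq ι] [DecidableEq α] [DecidableEq β] {L : Matrix ι α ℝ}
    {L' : Matrix ι β ℝ} (hL : Lᵀ * L = 1) (hL' : L'ᵀ * L' = 1) (hLL' : Lᵀ * L' = 0)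
    (hcard : Fintype.card β = Fintype.card ι - Fintype.card α) :
    L * Lᵀ + L' * L'ᵀ = 1 := by
  have hα := card_le_card_of_transpose_mul_self hL
  have hL'L : L'ᵀ * L = 0 := by
    rw [← Matrix.transpose_transpose L, ← Matrix.transpose_mul, hLL', Matrix.transpose_zero]
  have hU : (Matrix.fromCols L L')ᵀ * Matrix.fromCols L L' = 1 := by
    rw [Matrix.transpose_fromCols, Matrix.fromRows_mul_fromCols, hL, hL', hLL', hL'L,
      Matrix.fromBlocks_one]
  have e : ι ≃ α ⊕ β := Fintype.equivOfCardEq (by rw [Fintype.card_sum, hcard]; omega)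
  have hU' := (Matrix.mul_eq_one_comm_of_equiv e).mpr hU
  rwa [Matrix.transpose_fromCols, Matrix.fromCols_mul_fromRows] at hU'

section BoundedBelow

variable {ι₁ ι₂ ι₃ : Type*} [Fintype ι₁] [Fintype ι₂] [Fintype ι₃]

theorem euclNorm_add_le (u v : ι₁ → ℝ) : euclNorm (u + v) ≤ euclNorm u + euclNorm v := by
  simpa only [euclNorm_eq_norm_toLp, WithLp.toLp_add] using norm_add_le _ _

theorem euclNorm_smul (c : ℝ) (v : ι₁ → ℝ) : euclNorm (c • v) = |c| * euclNorm v := by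
  simp only [euclNorm_eq_norm_toLp, WithLp.toLp_smul, norm_smul, Real.norm_eq_abs]

theorem euclNorm_pos {v : ι₁ → ℝ} (hv : v ≠ 0) : 0 < euclNorm v := by
  simpa [euclNorm_eq_norm_toLp] using hv

theorem euclNorm_zero : euclNorm (0 : ι₁ → ℝ) = 0 := by
  simp [euclNorm]

/-- `τ ≤ σ_min(M)`, for `M` with at least as many rows as columns. -/
def IsBoundedBelow (M : Matrix ι₁ ι₂ ℝ) (τ : ℝ) : Prop :=
  ∀ v : ι₂ → ℝ, τ * euclNorm v ≤ euclNorm (M *ᵥ v)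

variable {M : Matrix ι₁ ι₂ ℝ} {τ : ℝ}

theorem isBoundedBelow_of_le_sInf
    (h : τ ≤ sInf {c : ℝ | ∃ x : ι₂ → ℝ, euclNorm x = 1 ∧ c = euclNorm (M.mulVec x)}) :
    IsBoundedBelow M τ := by
  intro v
  rcases eq_or_ne v 0 with rfl | hv
  · simp only [euclNorm_zero, mul_zero, Matrix.mulVec_zero, le_refl]
  have hpos := euclNorm_pos hv
  have hunit : euclNorm ((euclNorm v)⁻¹ • v) = 1 := by
    rw [euclNorm_smul, abs_inv, abs_of_pos hpos, inv_mul_cancel₀ hpos.ne']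
  have hle := h.trans (csInf_le ⟨0, by rintro _ ⟨x, -, rfl⟩; exact Real.sqrt_nonneg _⟩
    ⟨_, hunit, rfl⟩)
  rwa [Matrix.mulVec_smul, euclNorm_smul, abs_inv, abs_of_pos hpos, le_inv_mul_iff₀ hpos,
    mul_comm] at hle

theorem IsBoundedBelow.card_le (hM : IsBoundedBelow M τ) (hτ : 0 < τ) :
    Fintype.card ι₂ ≤ Fintype.card ι₁ := by
  have hinj : Function.Injective M.mulVecLin := by
    rw [← LinearMap.ker_eq_bot, LinearMap.ker_eq_bot']
    intro v hv
    by_contra hne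
    have hle := hM v
    rw [← Matrix.mulVecLin_apply, hv, euclNorm_zero] at hle
    linarith [mul_pos hτ (euclNorm_pos hne)]
  simpa only [Module.finrank_fintype_fun_eq_card] using
    LinearMap.finrank_le_finrank_of_injective hinj

theorem isBoundedBelow_of_le_sigmaMin (hτ : 0 < τ) (h : τ ≤ sigmaMin M)
    (hcard : 2 * Fintype.card ι₂ ≤ Fintype.card ι₁) : IsBoundedBelow M τ := by
  rcases le_max_iff.mp h with h | h
  · exact isBoundedBelow_of_le_sInf h
  -- Otherwise `Mᵀ` is bounded below, so `M` is also wide and therefore has no columns.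
  · have := (isBoundedBelow_of_le_sInf h).card_le hτ
    have : IsEmpty ι₂ := Fintype.card_eq_zero_iff.mp (by omega)
    intro v
    simp only [Subsingleton.elim v 0, euclNorm_zero, mul_zero, Matrix.mulVec_zero, le_refl]

variable [DecidableEq ι₃]

theorem IsBoundedBelow.mul_l2_opNorm_le (hM : IsBoundedBelow M τ) (N : Matrix ι₂ ι₃ ℝ) :
    τ * ‖N‖ ≤ ‖M * N‖ := by
  rcases le_or_gt τ 0 with hτ | hτ
  · exact (mul_nonpos_of_nonpos_of_nonneg hτ (norm_nonneg N)).trans (norm_nonneg _)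
  have hN : ‖N‖ ≤ τ⁻¹ * ‖M * N‖ := by
    refine l2_opNorm_le_of_euclNorm_mulVec_le (by positivity) fun v => ?_
    rw [mul_assoc, le_inv_mul_iff₀ hτ]
    calc τ * euclNorm (N *ᵥ v) ≤ euclNorm ((M * N) *ᵥ v) := by
          rw [← Matrix.mulVec_mulVec]; exact hM _
      _ ≤ ‖M * N‖ * euclNorm v := euclNorm_mulVec_le _ _
  calc τ * ‖N‖ ≤ τ * (τ⁻¹ * ‖M * N‖) := by gcongr
    _ = ‖M * N‖ := by field_simp

theorem IsBoundedBelow.transpose_mul [DecidableEq ι₁] [DecidableEq ι₂] {α β : Type*}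
    [Fintype α] [Fintype β] [DecidableEq α] [DecidableEq β] (hM : IsBoundedBelow M τ)
    {L : Matrix ι₁ α ℝ} {Lp : Matrix ι₁ β ℝ} (hL : ‖L‖ ≤ 1) (hLp : ‖Lp‖ ≤ 1)
    (hC : L * Lᵀ + Lp * Lpᵀ = 1) : IsBoundedBelow (Lᵀ * M) (τ - ‖Lpᵀ * M‖) := by
  intro v
  have hsplit : M *ᵥ v = L *ᵥ ((Lᵀ * M) *ᵥ v) + Lp *ᵥ ((Lpᵀ * M) *ᵥ v) := by
    simp only [Matrix.mulVec_mulVec, ← Matrix.add_mulVec, ← Matrix.mul_assoc, ← Matrix.add_mul,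
      hC, Matrix.one_mul]
  have hLv := (euclNorm_mulVec_le L ((Lᵀ * M) *ᵥ v)).trans
    (mul_le_of_le_one_left (Real.sqrt_nonneg _) hL)
  have hLpv := (euclNorm_mulVec_le Lp ((Lpᵀ * M) *ᵥ v)).trans
    (mul_le_of_le_one_left (Real.sqrt_nonneg _) hLp)
  have htri := euclNorm_add_le (L *ᵥ ((Lᵀ * M) *ᵥ v)) (Lp *ᵥ ((Lpᵀ * M) *ᵥ v))
  rw [← hsplit] at htri
  rw [sub_mul]
  linarith [hM v, euclNorm_mulVec_le (Lpᵀ * M) v]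

end BoundedBelow

section SpectralQuantities

variable {ι₁ ι₂ : Type*} [Fintype ι₁] [Fintype ι₂]

theorem sigmaPos_nonneg (M : Matrix ι₁ ι₂ ℝ) : 0 ≤ sigmaPos M :=
  Real.sInf_nonneg (by rintro _ ⟨_, _, _, rfl⟩; exact Real.sqrt_nonneg _)

theorem sigmaPos_pos_of_condNum_mul_pos {M : Matrix ι₁ ι₂ ℝ}
    (h : 0 < condNum M * specNorm M) : 0 < sigmaPos M := by
  refine (sigmaPos_nonneg M).lt_of_ne fun h0 => ?_
  rw [condNum, ← h0, div_zero, zero_mul] at h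
  exact h.false

variable [DecidableEq ι₂]

theorem sigmaPos_le_specNorm (M : Matrix ι₁ ι₂ ℝ) : sigmaPos M ≤ specNorm M := by
  rw [specNorm_eq_l2_opNorm, sigmaPos]
  rcases Set.eq_empty_or_nonempty {c : ℝ | ∃ x : ι₂ → ℝ, euclNorm x = 1 ∧
      (∀ y : ι₂ → ℝ, M.mulVec y = 0 → x ⬝ᵥ y = 0) ∧ c = euclNorm (M.mulVec x)} with he | hne
  · rw [he, Real.sInf_empty]; exact norm_nonneg M
  obtain ⟨c, hc⟩ := hne
  refine (csInf_le ⟨0, by rintro _ ⟨_, _, _, rfl⟩; exact Real.sqrt_nonneg _⟩ hc).trans ?_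
  obtain ⟨x, hx, -, rfl⟩ := hc
  simpa [hx] using euclNorm_mulVec_le M x

theorem inv_condNum_mul_sqrt_le (M : Matrix ι₁ ι₂ ℝ) :
    (condNum M)⁻¹ * √(specNorm M) ≤ √(sigmaPos M) := by
  have hσ := sigmaPos_nonneg M
  rw [condNum, inv_div]
  rcases (hσ.trans (sigmaPos_le_specNorm M)).eq_or_lt with hx | hx
  · rw [← hx, div_zero, zero_mul]; exact Real.sqrt_nonneg _
  rw [div_mul_eq_mul_div, div_le_iff₀ hx]
  calc sigmaPos M * √(specNorm M) = √(sigmaPos M) * (√(sigmaPos M) * √(specNorm M)) := by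
        rw [← mul_assoc, Real.mul_self_sqrt hσ]
    _ ≤ √(sigmaPos M) * (√(specNorm M) * √(specNorm M)) := by
        gcongr; exact sigmaPos_le_specNorm M
    _ = √(sigmaPos M) * specNorm M := by rw [Real.mul_self_sqrt hx.le]

theorem six_mul_le_sqrt_sigmaPos_div_eight {M : Matrix ι₁ ι₂ ℝ} {a z : ℝ}
    (hσ : 0 < sigmaPos M) (ha : a ≤ 1 / 100 / condNum M * z) (hz : z ≤ 2 * √(specNorm M)) :
    6 * a ≤ √(sigmaPos M / 8) := by
  have hκ : 0 ≤ condNum M :=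
    div_nonneg ((specNorm_eq_l2_opNorm M).symm ▸ norm_nonneg M) (sigmaPos_nonneg M)
  calc 6 * a ≤ 6 * (1 / 100 / condNum M * (2 * √(specNorm M))) := by
        gcongr; exact ha.trans (by gcongr)
    _ = 3 / 25 * ((condNum M)⁻¹ * √(specNorm M)) := by ring
    _ ≤ 3 / 25 * √(sigmaPos M) := by gcongr; exact inv_condNum_mul_sqrt_le M
    _ ≤ √(sigmaPos M / 8) := by
      rw [Real.le_sqrt (by positivity) (by positivity), mul_pow, Real.sq_sqrt hσ.le]
      linarith

end SpectralQuantities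

section Splitting

variable {ι₁ ι₂ κ α β : Type*} [Fintype κ] [Fintype α] [Fintype β]

theorem mul_transpose_eq_of_mul_transpose_add [DecidableEq κ] {Q : Matrix κ α ℝ}
    {Q' : Matrix κ β ℝ} (hQ : Q * Qᵀ + Q' * Q'ᵀ = 1) (A : Matrix ι₁ κ ℝ) (B : Matrix ι₂ κ ℝ) :
    A * Bᵀ = A * Q * (B * Q)ᵀ + A * Q' * (B * Q')ᵀ := by
  simp only [Matrix.transpose_mul, Matrix.mul_assoc, ← Matrix.mul_add]
  simp only [← Matrix.mul_assoc, ← Matrix.add_mul, hQ, Matrix.one_mul]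

theorem l2_opNorm_mul_transpose_le_of_mul_transpose_add [DecidableEq κ] [DecidableEq α]
    [DecidableEq β] [Fintype ι₁] [Fintype ι₂] [DecidableEq ι₁] [DecidableEq ι₂] {Q : Matrix κ α ℝ}
    {Q' : Matrix κ β ℝ} (hQ : Q * Qᵀ + Q' * Q'ᵀ = 1) (A : Matrix ι₁ κ ℝ) (B : Matrix ι₂ κ ℝ) :
    ‖A * Bᵀ‖ ≤ ‖A * Q‖ * ‖B * Q‖ + ‖A * Q'‖ * ‖B * Q'‖ := by
  rw [mul_transpose_eq_of_mul_transpose_add hQ A B]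
  refine (norm_add_le _ _).trans (add_le_add ?_ ?_)
  · simpa only [l2_opNorm_transpose] using Matrix.l2_opNorm_mul (A * Q) (B * Q)ᵀ
  · simpa only [l2_opNorm_transpose] using Matrix.l2_opNorm_mul (A * Q') (B * Q')ᵀ

theorem l2_opNorm_sq_le_of_mul_transpose_add [DecidableEq κ] [DecidableEq α] [DecidableEq β]
    [Fintype ι₁] [DecidableEq ι₁] {Q : Matrix κ α ℝ} {Q' : Matrix κ β ℝ}
    (hQ : Q * Qᵀ + Q' * Q'ᵀ = 1) (A : Matrix ι₁ κ ℝ) :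
    ‖A‖ ^ 2 ≤ ‖A * Q‖ ^ 2 + ‖A * Q'‖ ^ 2 := by
  have hA := Matrix.l2_opNorm_conjTranspose_mul_self Aᵀ
  rw [Matrix.conjTranspose_eq_transpose_of_trivial, Matrix.transpose_transpose,
    l2_opNorm_transpose] at hA
  rw [sq, sq, sq, ← hA]
  exact l2_opNorm_mul_transpose_le_of_mul_transpose_add hQ A A

theorem l2_opNorm_mul_le_of_mul_eq_zero [Fintype ι₁] [Fintype ι₂] [DecidableEq ι₁]
    [DecidableEq ι₂] [DecidableEq κ] [DecidableEq β] {L : Matrix ι₁ α ℝ} {Lp : Matrix ι₁ β ℝ}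
    (hC : L * Lᵀ + Lp * Lpᵀ = 1) (hLp : ‖Lp‖ ≤ 1) {A : Matrix ι₂ ι₁ ℝ} (hA : ‖A‖ ≤ 1)
    (hAL : A * L = 0) (Y : Matrix ι₁ κ ℝ) : ‖A * Y‖ ≤ ‖Lpᵀ * Y‖ := by
  have hAY : A * Y = A * Lp * (Lpᵀ * Y) := by
    conv_lhs => rw [← Matrix.one_mul Y, ← hC]
    simp only [Matrix.mul_add, Matrix.add_mul, ← Matrix.mul_assoc, hAL, Matrix.zero_mul,
      zero_add]
  rw [hAY]
  exact (Matrix.l2_opNorm_mul _ _).trans (mul_le_of_le_one_left (norm_nonneg _)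
    ((Matrix.l2_opNorm_mul A Lp).trans (mul_le_one₀ hA (norm_nonneg _) hLp)))

end Splitting

section FlipFrame

variable {ι α : Type*} [Fintype ι] [DecidableEq ι]

/-- In the paper's setting `S = diag(Id, -Id)` and `L = L_X`; then `S * L = (1/√2)[P_X; -Q_X]`. -/
structure IsFlipFrame [DecidableEq α] (S : Matrix ι ι ℝ) (L : Matrix ι α ℝ) : Prop where
  mul_self : S * S = 1
  transpose_eq : Sᵀ = S
  transpose_mul_self : Lᵀ * L = 1
  transpose_mul_flip : Lᵀ * (S * L) = 0

def complProj [Fintype α] (S : Matrix ι ι ℝ) (L : Matrix ι α ℝ) : Matrix ι ι ℝ :=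
  1 - L * Lᵀ - (S * L) * (S * L)ᵀ

theorem complProj_transpose [Fintype α] {S : Matrix ι ι ℝ} {L : Matrix ι α ℝ} :
    (complProj S L)ᵀ = complProj S L := by
  simp [complProj, Matrix.transpose_sub, Matrix.transpose_mul]

theorem add_complProj [Fintype α] {S : Matrix ι ι ℝ} {L : Matrix ι α ℝ} :
    L * Lᵀ + (S * L) * (S * L)ᵀ + complProj S L = 1 := by
  rw [complProj]; abel

variable [DecidableEq α] {S : Matrix ι ι ℝ} {L : Matrix ι α ℝ}

namespace IsFlipFrame

theorem transpose_flip (h : IsFlipFrame S L) : (S * L)ᵀ = Lᵀ * S := by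
  rw [Matrix.transpose_mul, h.transpose_eq]

theorem flip_transpose_mul_self (h : IsFlipFrame S L) : (S * L)ᵀ * (S * L) = 1 := by
  rw [h.transpose_flip, Matrix.mul_assoc, ← Matrix.mul_assoc S, h.mul_self, Matrix.one_mul,
    h.transpose_mul_self]

theorem flip_transpose_mul (h : IsFlipFrame S L) : (S * L)ᵀ * L = 0 := by
  rw [← Matrix.transpose_transpose L, ← Matrix.transpose_mul, Matrix.transpose_transpose,
    h.transpose_mul_flip, Matrix.transpose_zero]

theorem norm_flip_le_one (h : IsFlipFrame S L) : ‖S‖ ≤ 1 :=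
  l2_opNorm_le_one_of_transpose_mul_self (by rw [h.transpose_eq, h.mul_self])

variable [Fintype α]

theorem complProj_mul (h : IsFlipFrame S L) : complProj S L * L = 0 := by
  simp only [complProj, Matrix.sub_mul, Matrix.one_mul, Matrix.mul_assoc, h.transpose_mul_self,
    h.flip_transpose_mul, Matrix.mul_one, Matrix.mul_zero, sub_self]

theorem complProj_mul_flip (h : IsFlipFrame S L) : complProj S L * (S * L) = 0 := by
  simp only [complProj, Matrix.sub_mul, Matrix.one_mul, Matrix.mul_assoc L, h.transpose_mul_flip,
    Matrix.mul_assoc (S * L), h.flip_transpose_mul_self, Matrix.mul_one, Matrix.mul_zero,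
    sub_zero, sub_self]

theorem complProj_mul_self (h : IsFlipFrame S L) :
    complProj S L * complProj S L = complProj S L := by
  calc complProj S L * complProj S L
      = complProj S L * (1 - L * Lᵀ - (S * L) * (S * L)ᵀ) := rfl
    _ = complProj S L := by
      simp only [Matrix.mul_sub, Matrix.mul_one, ← Matrix.mul_assoc, h.complProj_mul,
        h.complProj_mul_flip, Matrix.zero_mul, sub_zero]

theorem complProj_commute (h : IsFlipFrame S L) : complProj S L * S = S * complProj S L := by
  have hright : complProj S L * S = S - L * Lᵀ * S - S * L * Lᵀ := by
    simp only [complProj, h.transpose_flip, Matrix.sub_mul, Matrix.one_mul, Matrix.mul_assoc,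
      h.mul_self, Matrix.mul_one]
  have hleft : S * complProj S L = S - S * L * Lᵀ - L * Lᵀ * S := by
    simp only [complProj, h.transpose_flip, Matrix.mul_sub, Matrix.mul_one, ← Matrix.mul_assoc,
      h.mul_self, Matrix.one_mul]
  rw [hright, hleft]; abel

theorem norm_le_one (h : IsFlipFrame S L) : ‖L‖ ≤ 1 :=
  l2_opNorm_le_one_of_transpose_mul_self h.transpose_mul_self

theorem norm_flip_mul_le_one (h : IsFlipFrame S L) : ‖S * L‖ ≤ 1 :=
  l2_opNorm_le_one_of_transpose_mul_self h.flip_transpose_mul_self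

theorem norm_complProj_le_one (h : IsFlipFrame S L) : ‖complProj S L‖ ≤ 1 :=
  l2_opNorm_le_one_of_transpose_mul_self_eq_self (by rw [complProj_transpose, h.complProj_mul_self])

end IsFlipFrame

end FlipFrame

section Residual

/-- With `S = diag(Id, -Id)` one has `S * Z_t = Z̃_t`, so this is `sym(X) − Z_tZ_tᵀ + Z̃_tZ̃_tᵀ`. -/
def residual {ι κ : Type*} [Fintype ι] [Fintype κ] (S X' : Matrix ι ι ℝ) (Z : Matrix ι κ ℝ) :
    Matrix ι ι ℝ :=
  X' - Z * Zᵀ + (S * Z) * (S * Z)ᵀ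

variable {ι κ : Type*} [Fintype ι] [Fintype κ] {S X' : Matrix ι ι ℝ} {Z : Matrix ι κ ℝ}

theorem residual_transpose (hX : X'ᵀ = X') : (residual S X' Z)ᵀ = residual S X' Z := by
  simp [residual, Matrix.transpose_add, Matrix.transpose_sub, Matrix.transpose_mul, hX]

theorem flip_mul_residual [DecidableEq ι] (hS : S * S = 1) (hSt : Sᵀ = S)
    (hX : S * X' = -(X' * S)) : S * residual S X' Z = -(residual S X' Z * S) := by
  have hSS : ∀ M : Matrix ι ι ℝ, S * (S * M) = M := fun M => by
    rw [← Matrix.mul_assoc, hS, Matrix.one_mul]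
  simp only [residual, Matrix.transpose_mul, hSt, Matrix.mul_add, Matrix.mul_sub, Matrix.add_mul,
    Matrix.sub_mul, Matrix.mul_assoc, hX, hSS, hS, Matrix.mul_one]
  abel

end Residual

namespace IsFlipFrame

variable {ι α κ : Type*} [Fintype ι] [DecidableEq ι] [Fintype α] [DecidableEq α] [Fintype κ]
  {S X' : Matrix ι ι ℝ} {L : Matrix ι α ℝ} {Z : Matrix ι κ ℝ}

theorem norm_le_of_anticommute (h : IsFlipFrame S L) {E : Matrix ι ι ℝ} (hE : Eᵀ = E)
    (hSE : S * E = -(E * S)) :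
    ‖E‖ ≤ 4 * ‖Lᵀ * E‖ + ‖complProj S L * E * complProj S L‖ := by
  have hflip : ‖(S * L)ᵀ * E‖ ≤ ‖Lᵀ * E‖ := by
    rw [h.transpose_flip, Matrix.mul_assoc, hSE, Matrix.mul_neg, norm_neg, ← Matrix.mul_assoc]
    exact l2_opNorm_mul_le_of_right_le_one _ h.norm_flip_le_one
  have hcol : ∀ M : Matrix ι α ℝ, ‖M‖ ≤ 1 → ‖M * (Mᵀ * E)‖ ≤ ‖Mᵀ * E‖ :=
    fun M hM => l2_opNorm_mul_le_of_left_le_one hM _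
  have hrow : ∀ M : Matrix ι α ℝ, ‖M‖ ≤ 1 → ‖complProj S L * E * M * Mᵀ‖ ≤ ‖Mᵀ * E‖ :=
    fun M hM => calc
      ‖complProj S L * E * M * Mᵀ‖ ≤ ‖complProj S L * E * M‖ :=
        l2_opNorm_mul_le_of_right_le_one _ (by rwa [l2_opNorm_transpose])
      _ = ‖Mᵀ * E * complProj S L‖ := by
        rw [← l2_opNorm_transpose, Matrix.transpose_mul, Matrix.transpose_mul, hE,
          complProj_transpose, Matrix.mul_assoc]
      _ ≤ ‖Mᵀ * E‖ := l2_opNorm_mul_le_of_right_le_one _ h.norm_complProj_le_one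
  have hleft : E = L * (Lᵀ * E) + S * L * ((S * L)ᵀ * E) + complProj S L * E := by
    conv_lhs => rw [← Matrix.one_mul E, ← add_complProj (S := S) (L := L)]
    simp only [Matrix.add_mul, Matrix.mul_assoc]
  have hright : complProj S L * E = complProj S L * E * L * Lᵀ
      + complProj S L * E * (S * L) * (S * L)ᵀ + complProj S L * E * complProj S L := by
    conv_lhs => rw [← Matrix.mul_one (complProj S L * E), ← add_complProj (S := S) (L := L)]
    simp only [Matrix.mul_add, Matrix.mul_assoc]
  calc ‖E‖ = ‖L * (Lᵀ * E) + S * L * ((S * L)ᵀ * E) + (complProj S L * E * L * Lᵀ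
        + complProj S L * E * (S * L) * (S * L)ᵀ + complProj S L * E * complProj S L)‖ := by
        rw [← hright, ← hleft]
    _ ≤ ‖L * (Lᵀ * E)‖ + ‖S * L * ((S * L)ᵀ * E)‖ + (‖complProj S L * E * L * Lᵀ‖
        + ‖complProj S L * E * (S * L) * (S * L)ᵀ‖ + ‖complProj S L * E * complProj S L‖) :=
        norm_add₃_le.trans (add_le_add_right norm_add₃_le _)
    _ ≤ ‖Lᵀ * E‖ + ‖Lᵀ * E‖ + (‖Lᵀ * E‖ + ‖Lᵀ * E‖ + ‖complProj S L * E * complProj S L‖) :=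
        add_le_add (add_le_add (hcol L h.norm_le_one) ((hcol _ h.norm_flip_mul_le_one).trans hflip))
          (add_le_add (add_le_add (hrow L h.norm_le_one)
            ((hrow _ h.norm_flip_mul_le_one).trans hflip)) le_rfl)
    _ = 4 * ‖Lᵀ * E‖ + ‖complProj S L * E * complProj S L‖ := by ring

theorem norm_complProj_residual_complProj_le [DecidableEq κ] (h : IsFlipFrame S L)
    (hX : complProj S L * X' = 0) :
    ‖complProj S L * residual S X' Z * complProj S L‖ ≤ 2 * ‖complProj S L * Z‖ ^ 2 := by
  obtain ⟨D, hD⟩ : ∃ D, D = complProj S L * Z := ⟨_, rfl⟩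
  have hZZ : complProj S L * (Z * Zᵀ) * complProj S L = D * Dᵀ := by
    rw [hD, Matrix.transpose_mul, complProj_transpose]; simp only [Matrix.mul_assoc]
  have hSZZ : complProj S L * (S * Z * (S * Z)ᵀ) * complProj S L = S * (D * Dᵀ) * S := by
    rw [← hZZ, Matrix.transpose_mul, h.transpose_eq]
    simp only [← Matrix.mul_assoc, h.complProj_commute]
    simp only [Matrix.mul_assoc, h.complProj_commute]
  have hid : complProj S L * residual S X' Z * complProj S L = S * (D * Dᵀ) * S - D * Dᵀ := by
    simp only [residual, Matrix.mul_add, Matrix.mul_sub, Matrix.add_mul, Matrix.sub_mul, hX,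
      hZZ, hSZZ, Matrix.zero_mul]
    abel
  have hDD : ‖D * Dᵀ‖ ≤ ‖D‖ ^ 2 := by
    simpa only [l2_opNorm_transpose, sq] using Matrix.l2_opNorm_mul D Dᵀ
  rw [hid, ← hD]
  calc ‖S * (D * Dᵀ) * S - D * Dᵀ‖ ≤ ‖S * (D * Dᵀ) * S‖ + ‖D * Dᵀ‖ := norm_sub_le _ _
    _ ≤ ‖D * Dᵀ‖ + ‖D * Dᵀ‖ := by
      gcongr
      exact (l2_opNorm_mul_le_of_right_le_one _ h.norm_flip_le_one).trans
        (l2_opNorm_mul_le_of_left_le_one h.norm_flip_le_one _)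
    _ ≤ 2 * ‖D‖ ^ 2 := by linarith

theorem transpose_mul_residual_mul_complProj (h : IsFlipFrame S L) (hXt : X'ᵀ = X')
    (hX : complProj S L * X' = 0) :
    Lᵀ * residual S X' Z * complProj S L
      = (S * L)ᵀ * Z * (complProj S L * Z)ᵀ * S - Lᵀ * Z * (complProj S L * Z)ᵀ := by
  have hX' : X' * complProj S L = 0 := by
    rw [← hXt, ← complProj_transpose, ← Matrix.transpose_mul, hX, Matrix.transpose_zero]
  simp only [residual, Matrix.transpose_mul, h.transpose_eq, complProj_transpose, Matrix.mul_add,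
    Matrix.mul_sub, Matrix.add_mul, Matrix.sub_mul, Matrix.mul_assoc, hX', Matrix.mul_zero,
    h.complProj_commute]
  abel

variable {β γ γ' : Type*} [Fintype β] [DecidableEq β] [DecidableEq κ] [Fintype γ]
  [DecidableEq γ] [Fintype γ'] [DecidableEq γ'] {Lp : Matrix ι β ℝ} {Q : Matrix κ γ ℝ}
  {Q' : Matrix κ γ' ℝ} {τ : ℝ}

theorem mul_norm_complProj_mul_le (h : IsFlipFrame S L) (hLp : Lpᵀ * Lp = 1)
    (hC : L * Lᵀ + Lp * Lpᵀ = 1) (hXt : X'ᵀ = X') (hX : complProj S L * X' = 0)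
    (hQ : Q * Qᵀ + Q' * Q'ᵀ = 1) (hY : IsBoundedBelow (Z * Q) τ) :
    (τ - 2 * ‖Lpᵀ * (Z * Q)‖) * ‖complProj S L * Z * Q‖
      ≤ ‖Lᵀ * residual S X' Z‖ + 2 * ‖Z * Q'‖ ^ 2 := by
  obtain ⟨D, hD⟩ : ∃ D, D = complProj S L * Z := ⟨_, rfl⟩
  rw [← hD]
  have hLp' : ‖Lp‖ ≤ 1 := l2_opNorm_le_one_of_transpose_mul_self hLp
  have hLT : ‖Lᵀ‖ ≤ 1 := by rw [l2_opNorm_transpose]; exact h.norm_le_one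
  have hSLT : ‖(S * L)ᵀ‖ ≤ 1 := by rw [l2_opNorm_transpose]; exact h.norm_flip_mul_le_one
  have hlower : (τ - ‖Lpᵀ * (Z * Q)‖) * ‖D * Q‖ ≤ ‖Lᵀ * Z * Q * (D * Q)ᵀ‖ := by
    simpa only [l2_opNorm_transpose, Matrix.mul_assoc] using
      (hY.transpose_mul h.norm_le_one hLp' hC).mul_l2_opNorm_le (D * Q)ᵀ
  have hid : Lᵀ * Z * Q * (D * Q)ᵀ = (S * L)ᵀ * Z * Dᵀ * S
      - Lᵀ * residual S X' Z * complProj S L - Lᵀ * Z * Q' * (D * Q')ᵀ := by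
    rw [h.transpose_mul_residual_mul_complProj hXt hX, ← hD,
      mul_transpose_eq_of_mul_transpose_add hQ (Lᵀ * Z) D]
    abel
  have hflipQ : ‖(S * L)ᵀ * Z * Q‖ ≤ ‖Lpᵀ * (Z * Q)‖ := by
    rw [Matrix.mul_assoc]
    exact l2_opNorm_mul_le_of_mul_eq_zero hC hLp' hSLT h.flip_transpose_mul _
  have hLQ' : ‖Lᵀ * Z * Q'‖ ≤ ‖Z * Q'‖ := by
    rw [Matrix.mul_assoc]; exact l2_opNorm_mul_le_of_left_le_one hLT _
  have hflipQ' : ‖(S * L)ᵀ * Z * Q'‖ ≤ ‖Z * Q'‖ := by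
    rw [Matrix.mul_assoc]; exact l2_opNorm_mul_le_of_left_le_one hSLT _
  have hDQ' : ‖D * Q'‖ ≤ ‖Z * Q'‖ := by
    rw [hD, Matrix.mul_assoc]; exact l2_opNorm_mul_le_of_left_le_one h.norm_complProj_le_one _
  have hupper : ‖Lᵀ * Z * Q * (D * Q)ᵀ‖ ≤ ‖(S * L)ᵀ * Z * Q‖ * ‖D * Q‖
      + ‖(S * L)ᵀ * Z * Q'‖ * ‖D * Q'‖ + ‖Lᵀ * residual S X' Z‖ + ‖Lᵀ * Z * Q'‖ * ‖D * Q'‖ := by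
    rw [hid]
    refine norm_sub_le_of_le (norm_sub_le_of_le ?_ ?_) ?_
    · exact (l2_opNorm_mul_le_of_right_le_one _ h.norm_flip_le_one).trans
        (l2_opNorm_mul_transpose_le_of_mul_transpose_add hQ _ D)
    · exact l2_opNorm_mul_le_of_right_le_one _ h.norm_complProj_le_one
    · simpa only [l2_opNorm_transpose] using Matrix.l2_opNorm_mul (Lᵀ * Z * Q') (D * Q')ᵀ
  have hs₁ := mul_le_mul hflipQ' hDQ' (norm_nonneg _) (norm_nonneg _)
  have hs₂ := mul_le_mul hLQ' hDQ' (norm_nonneg _) (norm_nonneg _)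
  linarith [mul_le_mul_of_nonneg_right hflipQ (norm_nonneg (D * Q))]

theorem norm_residual_le (h : IsFlipFrame S L) (hLp : Lpᵀ * Lp = 1)
    (hC : L * Lᵀ + Lp * Lpᵀ = 1) (hXt : X'ᵀ = X') (hXS : S * X' = -(X' * S))
    (hX : complProj S L * X' = 0) (hQ : Q * Qᵀ + Q' * Q'ᵀ = 1) (hY : IsBoundedBelow (Z * Q) τ)
    (hτ : 6 * ‖Lpᵀ * (Z * Q)‖ ≤ τ) :
    ‖residual S X' Z‖ ≤ 5 * ‖Lᵀ * residual S X' Z‖ + 4 * ‖Z * Q'‖ ^ 2 := by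
  have hE := h.norm_le_of_anticommute (residual_transpose (Z := Z) hXt)
    (flip_mul_residual h.mul_self h.transpose_eq hXS)
  have hcompl := h.norm_complProj_residual_complProj_le (Z := Z) hX
  have hkey := h.mul_norm_complProj_mul_le hLp hC hXt hX hQ hY
  have hD := l2_opNorm_sq_le_of_mul_transpose_add hQ (complProj S L * Z)
  have hDQ : ‖complProj S L * Z * Q‖ ≤ ‖Lpᵀ * (Z * Q)‖ := by
    rw [Matrix.mul_assoc]
    exact l2_opNorm_mul_le_of_mul_eq_zero hC (l2_opNorm_le_one_of_transpose_mul_self hLp)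
      h.norm_complProj_le_one h.complProj_mul _
  have hDQ' : ‖complProj S L * Z * Q'‖ ^ 2 ≤ ‖Z * Q'‖ ^ 2 := by
    rw [Matrix.mul_assoc]
    gcongr
    exact l2_opNorm_mul_le_of_left_le_one h.norm_complProj_le_one _
  have h1 := mul_le_mul_of_nonneg_left hDQ (norm_nonneg (complProj S L * Z * Q))
  have h2 := mul_nonneg (norm_nonneg (complProj S L * Z * Q)) (sub_nonneg.2 hτ)
  linarith [norm_nonneg (Lᵀ * residual S X' Z), sq_nonneg ‖Z * Q'‖]

end IsFlipFrame

section Symmetrization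

theorem flipSign_mul_self : flipSign n₁ n₂ * flipSign n₁ n₂ = 1 := by
  simp [flipSign, Matrix.fromBlocks_multiply, ← Matrix.fromBlocks_one]

theorem flipSign_transpose : (flipSign n₁ n₂)ᵀ = flipSign n₁ n₂ := by
  simp [flipSign, Matrix.fromBlocks_transpose]

theorem flipSign_mul_Zstack (V : Matrix (Fin n₁) (Fin r) ℝ) (W : Matrix (Fin n₂) (Fin r) ℝ) :
    flipSign n₁ n₂ * Zstack V W = Zstack V (-W) := by
  simp [flipSign, Zstack, Matrix.mul_smul, Matrix.fromBlocks_mul_fromRows]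

theorem Ztil_eq_flipSign_mul_Zit (A : Fin m → Matrix (Fin n₁) (Fin n₂) ℝ)
    (X : Matrix (Fin n₁) (Fin n₂) ℝ) (μ : ℝ) (V₀ : Matrix (Fin n₁) (Fin k) ℝ)
    (W₀ : Matrix (Fin n₂) (Fin k) ℝ) (t : ℕ) :
    Ztil A X μ V₀ W₀ t = flipSign n₁ n₂ * Zit A X μ V₀ W₀ t :=
  (flipSign_mul_Zstack _ _).symm

theorem Zstack_mul_transpose_Zstack (V V' : Matrix (Fin n₁) (Fin r) ℝ)
    (W W' : Matrix (Fin n₂) (Fin r) ℝ) :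
    Zstack V W * (Zstack V' W')ᵀ
      = (2⁻¹ : ℝ) • Matrix.fromBlocks (V * V'ᵀ) (V * W'ᵀ) (W * V'ᵀ) (W * W'ᵀ) := by
  rw [Zstack, Zstack, Matrix.transpose_smul, Matrix.transpose_fromRows, Matrix.smul_mul,
    Matrix.mul_smul, smul_smul, Matrix.fromRows_mul_fromCols, ← mul_inv,
    Real.mul_self_sqrt zero_le_two]

theorem Zstack_transpose_mul_Zstack (V V' : Matrix (Fin n₁) (Fin r) ℝ)
    (W W' : Matrix (Fin n₂) (Fin r) ℝ) :
    (Zstack V W)ᵀ * Zstack V' W' = (2⁻¹ : ℝ) • (Vᵀ * V' + Wᵀ * W') := by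
  rw [Zstack, Zstack, Matrix.transpose_smul, Matrix.transpose_fromRows, Matrix.smul_mul,
    Matrix.mul_smul, smul_smul, Matrix.fromCols_mul_fromRows, ← mul_inv,
    Real.mul_self_sqrt zero_le_two]

theorem isFlipFrame_Zstack {P : Matrix (Fin n₁) (Fin r) ℝ} {Q : Matrix (Fin n₂) (Fin r) ℝ}
    (hP : Pᵀ * P = 1) (hQ : Qᵀ * Q = 1) : IsFlipFrame (flipSign n₁ n₂) (Zstack P Q) where
  mul_self := flipSign_mul_self
  transpose_eq := flipSign_transpose
  transpose_mul_self := by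
    rw [Zstack_transpose_mul_Zstack, hP, hQ, ← two_smul ℝ, smul_smul]; norm_num
  transpose_mul_flip := by
    rw [flipSign_mul_Zstack, Zstack_transpose_mul_Zstack, Matrix.mul_neg, hP, hQ, add_neg_cancel,
      smul_zero]

theorem symMat_transpose (X : Matrix (Fin n₁) (Fin n₂) ℝ) : (symMat X)ᵀ = symMat X := by
  simp [symMat, Matrix.fromBlocks_transpose]

theorem flipSign_mul_symMat (X : Matrix (Fin n₁) (Fin n₂) ℝ) :
    flipSign n₁ n₂ * symMat X = -(symMat X * flipSign n₁ n₂) := by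
  simp [flipSign, symMat, Matrix.fromBlocks_multiply, Matrix.fromBlocks_neg]

theorem complProj_flipSign_Zstack_mul_symMat {P : Matrix (Fin n₁) (Fin r) ℝ}
    {Q : Matrix (Fin n₂) (Fin r) ℝ} (hP : Pᵀ * P = 1) (hQ : Qᵀ * Q = 1)
    (D : Matrix (Fin r) (Fin r) ℝ) :
    complProj (flipSign n₁ n₂) (Zstack P Q) * symMat (P * D * Qᵀ) = 0 := by
  have hsum : Zstack P Q * (Zstack P Q)ᵀ
      + flipSign n₁ n₂ * Zstack P Q * (flipSign n₁ n₂ * Zstack P Q)ᵀ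
      = Matrix.fromBlocks (P * Pᵀ) 0 0 (Q * Qᵀ) := by
    rw [flipSign_mul_Zstack, Zstack_mul_transpose_Zstack, Zstack_mul_transpose_Zstack, ← smul_add,
      Matrix.fromBlocks_add]
    simp only [Matrix.transpose_neg, Matrix.mul_neg, Matrix.neg_mul, neg_neg, add_neg_cancel,
      Matrix.fromBlocks_smul, smul_zero, ← two_smul ℝ (P * Pᵀ), ← two_smul ℝ (Q * Qᵀ), smul_smul]
    norm_num
  have hP' : P * Pᵀ * (P * D * Qᵀ) = P * D * Qᵀ := by
    simp only [Matrix.mul_assoc, ← Matrix.mul_assoc Pᵀ, hP, Matrix.one_mul]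
  have hQ' : Q * Qᵀ * (P * D * Qᵀ)ᵀ = (P * D * Qᵀ)ᵀ := by
    simp only [Matrix.transpose_mul, Matrix.transpose_transpose, Matrix.mul_assoc,
      ← Matrix.mul_assoc Qᵀ, hQ, Matrix.one_mul]
  rw [complProj, sub_sub, Matrix.sub_mul, hsum, Matrix.one_mul, symMat, Matrix.fromBlocks_multiply]
  simp only [Matrix.zero_mul, Matrix.mul_zero, add_zero, zero_add, hP', hQ', sub_self]

end Symmetrization

/-- bounding the full residual by its projection onto the signal space. -/
theorem statement16_residual_bound :
    ∃ c : ℝ, 0 < c ∧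
    ∀
    (n₁ n₂ m k r : ℕ)
    (A : Fin m → Matrix (Fin n₁) (Fin n₂) ℝ) (X : Matrix (Fin n₁) (Fin n₂) ℝ)
    (PX : Matrix (Fin n₁) (Fin r) ℝ) (QX : Matrix (Fin n₂) (Fin r) ℝ) (σX : Fin r → ℝ)
    (hPX : PXᵀ * PX = 1) (hQX : QXᵀ * QX = 1)
    (hσpos : ∀ i, 0 < σX i) (hσanti : Antitone σX)
    (hXsvd : X = PX * Matrix.diagonal σX * QXᵀ)
    (μ : ℝ) (hμ : 0 < μ)
    (V₀ : Matrix (Fin n₁) (Fin k) ℝ) (W₀ : Matrix (Fin n₂) (Fin k) ℝ)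
    (Z Z' : ℕ → Matrix (Fin n₁ ⊕ Fin n₂) (Fin k) ℝ)
    (hZ : Z = Zit A X μ V₀ W₀) (hZ' : Z' = Ztil A X μ V₀ W₀)
    (LX : Matrix (Fin n₁ ⊕ Fin n₂) (Fin r) ℝ) (hLX : LX = Zstack PX QX)
    (κ σm : ℝ) (hκ : κ = condNum X) (hσm : σm = sigmaPos X)
    (Δ : ℕ → Matrix (Fin n₁ ⊕ Fin n₂) (Fin n₁ ⊕ Fin n₂) ℝ) (hΔ : Δ = Δit A X μ V₀ W₀)
    (LXp : Matrix (Fin n₁ ⊕ Fin n₂) (Fin (n₁ + n₂ - r)) ℝ)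
    (hLXp1 : LXpᵀ * LXp = 1) (hLXp2 : LXᵀ * LXp = 0)
    (t : ℕ)
    (Qt : Matrix (Fin k) (Fin r) ℝ) (hQt1 : Qtᵀ * Qt = 1)
    (hQt2 : LXᵀ * Z t * Qt * Qtᵀ = LXᵀ * Z t)
    (Qtp : Matrix (Fin k) (Fin (k - r)) ℝ) (hQtp1 : Qtpᵀ * Qtp = 1) (hQtp2 : Qtᵀ * Qtp = 0)
    (PZ : Matrix (Fin n₁ ⊕ Fin n₂) (Fin r) ℝ) (hPZ : IsOrthCol PZ (Z t * Qt))
    (h1 : μ ≤ c / (κ * specNorm X))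
    (h2 : specNorm (LXpᵀ * PZ) ≤ c / κ)
    (h3 : specNorm (Z t) ≤ 2 * Real.sqrt (specNorm X))
    (h4 : specNorm (Δ t) ≤ c / κ * specNorm (symMat X - Z t * (Z t)ᵀ + Z' t * (Z' t)ᵀ))
    (h5 : Real.sqrt (σm / 8) ≤ sigmaMin (Z t * Qt))
    (h6 : specNorm (Z t * Qtp) ≤ c * Real.sqrt σm),
    specNorm (LXpᵀ * (symMat X - Z t * (Z t)ᵀ + Z' t * (Z' t)ᵀ))
      ≤ 5 * specNorm (LXᵀ * (symMat X - Z t * (Z t)ᵀ + Z' t * (Z' t)ᵀ))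
        + 4 * specNorm (Z t * Qtp) ^ 2 ∧
    specNorm (symMat X - Z t * (Z t)ᵀ + Z' t * (Z' t)ᵀ)
      ≤ 6 * specNorm (LXᵀ * (symMat X - Z t * (Z t)ᵀ + Z' t * (Z' t)ᵀ))
        + 4 * specNorm (Z t * Qtp) ^ 2 := by
  refine ⟨1 / 100, by norm_num, ?_⟩
  intro n₁ n₂ m k r A X PX QX σX hPX hQX _ _ hXsvd μ hμ V₀ W₀ Z Z' hZ hZ' LX hLX κ σm hκ hσm
    _ _ LXp hLXp1 hLXp2 t Qt hQt1 _ Qtp hQtp1 hQtp2 PZ hPZ h1 h2 h3 _ h5 _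
  subst hLX hκ hσm
  have hσ : 0 < sigmaPos X :=
    sigmaPos_pos_of_condNum_mul_pos ((div_pos_iff_of_pos_left (by norm_num)).mp (hμ.trans_le h1))
  have hframe := isFlipFrame_Zstack hPX hQX
  have hC := mul_transpose_add_mul_transpose_eq_one hframe.transpose_mul_self hLXp1 hLXp2
    (by simp only [Fintype.card_fin, Fintype.card_sum])
  have hQC := mul_transpose_add_mul_transpose_eq_one hQt1 hQtp1 hQtp2
    (by simp only [Fintype.card_fin])
  have hr₁ := card_le_card_of_transpose_mul_self hPX
  have hr₂ := card_le_card_of_transpose_mul_self hQX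
  have hY := isBoundedBelow_of_le_sigmaMin (by positivity) h5
    (by simp only [Fintype.card_fin, Fintype.card_sum] at hr₁ hr₂ ⊢; omega)
  have hZQ := l2_opNorm_mul_le_of_right_le_one (Z t) (l2_opNorm_le_one_of_transpose_mul_self hQt1)
  rw [specNorm_eq_l2_opNorm] at h2
  rw [specNorm_eq_l2_opNorm (Z t)] at h3
  have hleak := six_mul_le_sqrt_sigmaPos_div_eight hσ ((hPZ.l2_opNorm_mul_le LXpᵀ).trans
    (mul_le_mul h2 hZQ (norm_nonneg _) ((norm_nonneg _).trans h2))) h3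
  have hE := hframe.norm_residual_le hLXp1 hC (symMat_transpose X) (flipSign_mul_symMat X)
    (by rw [hXsvd]; exact complProj_flipSign_Zstack_mul_symMat hPX hQX _) hQC hY hleak
  rw [hZ', Ztil_eq_flipSign_mul_Zit, ← hZ]
  simp only [specNorm_eq_l2_opNorm]
  refine ⟨(l2_opNorm_mul_le_of_left_le_one ?_ _).trans hE, hE.trans ?_⟩
  · rw [l2_opNorm_transpose]; exact l2_opNorm_le_one_of_transpose_mul_self hLXp1
  · gcongr ?_ * _ + _; norm_num

end AsymMatrixSensing
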